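/- arXiv:1503.02178 — 9 statements merged into one kernel-verified Lean document; each statement's English description precedes it below -/
import Mathlib

section
/- Let r ≥ 0 and let A = (a_{ij})_{0≤i,j≤r} be the (r+1)×(r+1) matrix with a_{ij} = 1/(3r+1-3i-j)! when 3r+1-3i-j ≥ 0 and a_{ij} = 0 otherwise. Then A is invertible. -/
/-!
Writing `m i = 3 (r - i) + 1`, the entry in row `i`, column `j` is `1 / (m i - j)!`, which equals
`m i (m i - 1) ⋯ (m i - j + 1) / (m i)!` (and vanishes exactly when `j > m i`). Pulling the
factors `1 / (m i)!` out of the rows leaves the matrix of the falling factorials `(X)_j`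
evaluated at the `m i`. These are monic polynomials of degree `j`, so that matrix has the
determinant of the Vandermonde matrix of the pairwise distinct nodes `m i`.
-/

open Matrix

variable {K : Type*} [Field K] [CharZero K] {n : ℕ}

theorem det_of_descFactorial_ne_zero {m : Fin n → ℕ} (hm : Function.Injective m) :
    (of fun i j : Fin n => ((m i).descFactorial j : K)).det ≠ 0 := by
  have hdet := det_eval_matrixOfPolynomials_eq_det_vandermonde (fun i => (m i : K))
    (fun j => descPochhammer K j) (fun j => descPochhammer_natDegree K j)
    (fun j => monic_descPochhammer K j)
  simp only [descPochhammer_eval_eq_descFactorial] at hdet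
  rw [← hdet, det_vandermonde_ne_zero_iff]
  exact Nat.cast_injective.comp hm

theorem inv_factorial_sub_eq_inv_factorial_mul_descFactorial {a b : ℕ} :
    (if b ≤ a then ((a - b).factorial : K)⁻¹ else 0) =
      (a.factorial : K)⁻¹ * a.descFactorial b := by
  split_ifs with hba
  · have hdesc : (a.descFactorial b : K) ≠ 0 :=
      Nat.cast_ne_zero.mpr (mt Nat.descFactorial_eq_zero_iff_lt.mp (not_lt.mpr hba))
    rw [← Nat.factorial_mul_descFactorial hba, Nat.cast_mul]
    field_simp
  · rw [Nat.descFactorial_eq_zero_iff_lt.mpr (not_le.mp hba)]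
    simp

theorem of_inv_factorial_sub_eq_diagonal_mul (m : Fin n → ℕ) :
    (of fun i j : Fin n => if (j : ℕ) ≤ m i then ((m i - j).factorial : K)⁻¹ else 0) =
      diagonal (fun i => ((m i).factorial : K)⁻¹) *
        of fun i (j : Fin n) => ((m i).descFactorial j : K) := by
  ext i j
  simp only [of_apply, diagonal_mul, inv_factorial_sub_eq_inv_factorial_mul_descFactorial]

theorem det_of_inv_factorial_sub_ne_zero {m : Fin n → ℕ} (hm : Function.Injective m) :
    (of fun i j : Fin n =>
      if (j : ℕ) ≤ m i then ((m i - j).factorial : K)⁻¹ else 0).det ≠ 0 := by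
  rw [of_inv_factorial_sub_eq_diagonal_mul, det_mul, det_diagonal]
  refine mul_ne_zero (Finset.prod_ne_zero_iff.mpr fun i _ => ?_) (det_of_descFactorial_ne_zero hm)
  exact inv_ne_zero (Nat.cast_ne_zero.mpr (Nat.factorial_ne_zero _))

/-- The (r+1)×(r+1) matrix with entries 1/(3r+1-3i-j)! (when 3r+1-3i-j ≥ 0,
and 0 otherwise) is invertible. -/
theorem stmt2 (r : ℕ) (A : Matrix (Fin (r + 1)) (Fin (r + 1)) ℚ)
    (hA : ∀ i j : Fin (r + 1), A i j =
      if 3 * (i : ℕ) + (j : ℕ) ≤ 3 * r + 1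
        then ((3 * r + 1 - 3 * (i : ℕ) - (j : ℕ)).factorial : ℚ)⁻¹
        else 0) :
    A.det ≠ 0 := by
  let m : Fin (r + 1) → ℕ := fun i => 3 * (r - i) + 1
  have hm : Function.Injective m := fun i j hij => by
    have hi := i.is_le
    have hj := j.is_le
    exact Fin.ext (by simp only [m] at hij; omega)
  suffices hAm : A = of fun i (j : Fin (r + 1)) =>
      if (j : ℕ) ≤ m i then ((m i - j).factorial : ℚ)⁻¹ else 0 from
    hAm ▸ det_of_inv_factorial_sub_ne_zero hm
  ext i j
  have hi := i.is_le
  have hcond : 3 * (i : ℕ) + j ≤ 3 * r + 1 ↔ j ≤ m i := by simp only [m]; omega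
  have hsub : 3 * r + 1 - 3 * (i : ℕ) - j = m i - j := by simp only [m]; omega
  rw [hA, of_apply, hsub]
  simp only [hcond]
end

section
/- Let r ≥ 0 and let f(x) = Σ_{i=0}^{r} v_i x^{3r+1-3i}/(3r+1-3i)! be a polynomial with complex coefficients v_0,…,v_r. If the j-th derivative f^{(j)}(1) = 0 for all 0 ≤ j ≤ r, then f = 0 identically (hence all v_i = 0). -/
open Polynomial

/-- If f(x) = Σ_{i=0}^{r} v_i x^{3r+1-3i}/(3r+1-3i)! has complex coefficients
and f^{(j)}(1) = 0 for all 0 ≤ j ≤ r, then f = 0 (hence all v_i = 0). -/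
theorem stmt3 (r : ℕ) (v : ℕ → ℂ) (f : ℂ[X])
    (hf : f = ∑ i ∈ Finset.range (r + 1),
      C (v i / ((3 * r + 1 - 3 * i).factorial : ℂ)) * X ^ (3 * r + 1 - 3 * i))
    (hder : ∀ j ≤ r, (Polynomial.derivative^[j] f).eval 1 = 0) :
    f = 0 ∧ ∀ i ≤ r, v i = 0 := by
  -- explicit formula for iterated derivatives
  have hiter : ∀ j : ℕ, derivative^[j] f = ∑ i ∈ Finset.range (r + 1),
      C (v i / ((3 * r + 1 - 3 * i).factorial : ℂ) * ((3 * r + 1 - 3 * i).descFactorial j : ℂ))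
        * X ^ (3 * r + 1 - 3 * i - j) := by
    intro j
    rw [hf, iterate_derivative_sum]
    refine Finset.sum_congr rfl fun i _ => ?_
    rw [iterate_derivative_C_mul, iterate_derivative_X_pow_eq_C_mul, C_mul]
    ring
  -- derivatives vanish at every cube root of unity
  have key : ∀ a : ℂ, a ^ 3 = 1 → ∀ j ≤ r, (derivative^[j] f).eval a = 0 := by
    intro a ha j hj
    have ha0 : a ≠ 0 := by
      intro h; rw [h] at ha; simp at ha
    have h1 := hder j hj
    rw [hiter] at h1 ⊢
    simp only [eval_finset_sum, eval_mul, eval_C, eval_pow, eval_X, one_pow, mul_one] at h1 ⊢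
    have hmul : (∑ i ∈ Finset.range (r + 1),
        v i / ((3 * r + 1 - 3 * i).factorial : ℂ) * ((3 * r + 1 - 3 * i).descFactorial j : ℂ)
          * a ^ (3 * r + 1 - 3 * i - j)) * a ^ j
        = a * ∑ i ∈ Finset.range (r + 1),
        v i / ((3 * r + 1 - 3 * i).factorial : ℂ) * ((3 * r + 1 - 3 * i).descFactorial j : ℂ) := by
      rw [Finset.sum_mul, Finset.mul_sum]
      refine Finset.sum_congr rfl fun i hi => ?_
      rcases le_or_gt j (3 * r + 1 - 3 * i) with h | h
      · have hi' : i ≤ r := Nat.lt_succ_iff.mp (Finset.mem_range.mp hi)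
        have hpow : a ^ (3 * r + 1 - 3 * i - j) * a ^ j = a := by
          rw [← pow_add]
          have he : 3 * r + 1 - 3 * i - j + j = 3 * (r - i) + 1 := by omega
          rw [he, pow_add, pow_mul, ha, one_pow, pow_one, one_mul]
        rw [mul_assoc, hpow]; ring
      · have hd : (3 * r + 1 - 3 * i).descFactorial j = 0 :=
          Nat.descFactorial_eq_zero_iff_lt.mpr h
        simp [hd]
    rw [h1, mul_zero] at hmul
    exact (mul_eq_zero.mp hmul).resolve_right (pow_ne_zero j ha0)
  -- a primitive cube root of unity
  obtain ⟨ζ, hζ⟩ : ∃ ζ : ℂ, IsPrimitiveRoot ζ 3 := ⟨_, Complex.isPrimitiveRoot_exp 3 (by norm_num)⟩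
  have hζ3 : ζ ^ 3 = 1 := hζ.pow_eq_one
  have hζ23 : (ζ ^ 2) ^ 3 = 1 := by rw [← pow_mul, mul_comm, pow_mul, hζ3, one_pow]
  have hζ1 : ζ ≠ 1 := hζ.ne_one (by norm_num)
  have hζ0 : ζ ≠ 0 := by
    intro h; rw [h] at hζ3; simp at hζ3
  have hζ21 : ζ ^ 2 ≠ 1 := hζ.pow_ne_one_of_pos_of_lt (by norm_num) (by norm_num)
  have hζζ2 : ζ ≠ ζ ^ 2 := by
    intro h
    have : ζ * 1 = ζ * ζ := by rw [mul_one, ← sq, ← h]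
    exact hζ1 (mul_left_cancel₀ hζ0 this).symm
  -- degree bound
  have hdeg : f.natDegree ≤ 3 * r + 1 := by
    rw [hf]
    refine Polynomial.natDegree_sum_le_of_forall_le _ _ fun i _ => ?_
    exact (natDegree_C_mul_le _ _).trans (by simp)
  -- f = 0
  have hf0 : f = 0 := by
    by_contra hne
    have hm : ∀ a : ℂ, a ^ 3 = 1 → (X - C a) ^ (r + 1) ∣ f := by
      intro a ha
      have hlt : r < f.rootMultiplicity a :=
        (lt_rootMultiplicity_iff_isRoot_iterate_derivative hne).mpr fun m hm => key a ha m hm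
      exact dvd_trans (pow_dvd_pow _ hlt) (pow_rootMultiplicity_dvd f a)
    have cop : ∀ a b : ℂ, a ≠ b → IsCoprime ((X - C a) ^ (r + 1)) ((X - C b) ^ (r + 1)) :=
      fun a b hab => (Polynomial.isCoprime_X_sub_C_of_isUnit_sub
        ((sub_ne_zero.mpr hab).isUnit)).pow
    have d1 := hm 1 (one_pow 3)
    have d2 := hm ζ hζ3
    have d3 := hm (ζ ^ 2) hζ23
    have d12 : (X - C 1) ^ (r + 1) * (X - C ζ) ^ (r + 1) ∣ f :=
      (cop 1 ζ (Ne.symm hζ1)).mul_dvd d1 d2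
    have cop3 : IsCoprime ((X - C 1) ^ (r + 1) * (X - C ζ) ^ (r + 1))
        ((X - C (ζ ^ 2)) ^ (r + 1)) :=
      (cop 1 (ζ ^ 2) (Ne.symm hζ21)).mul_left (cop ζ (ζ ^ 2) hζζ2)
    have dall : (X - C 1) ^ (r + 1) * (X - C ζ) ^ (r + 1) * (X - C (ζ ^ 2)) ^ (r + 1) ∣ f :=
      cop3.mul_dvd d12 d3
    have hmon : ((X - C (1:ℂ)) ^ (r + 1) * (X - C ζ) ^ (r + 1) * (X - C (ζ ^ 2)) ^ (r + 1)).natDegree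
        = 3 * (r + 1) := by
      rw [(((monic_X_sub_C (1:ℂ)).pow _).mul ((monic_X_sub_C ζ).pow _)).natDegree_mul
        ((monic_X_sub_C (ζ ^ 2)).pow _),
        ((monic_X_sub_C (1:ℂ)).pow _).natDegree_mul ((monic_X_sub_C ζ).pow _)]
      simp only [natDegree_pow, natDegree_X_sub_C, mul_one]
      ring
    have := Polynomial.natDegree_le_of_dvd dall hne
    omega
  refine ⟨hf0, fun i hi => ?_⟩
  -- coefficients vanish
  have hsum : (∑ i ∈ Finset.range (r + 1),
      C (v i / ((3 * r + 1 - 3 * i).factorial : ℂ)) * X ^ (3 * r + 1 - 3 * i)) = 0 := by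
    rw [← hf, hf0]
  have hc := congrArg (fun p : ℂ[X] => p.coeff (3 * r + 1 - 3 * i)) hsum
  simp only [finset_sum_coeff, coeff_C_mul, coeff_X_pow, coeff_zero] at hc
  rw [Finset.sum_eq_single i] at hc
  · simp only [if_true, eq_self_iff_true, mul_one] at hc
    rcases div_eq_zero_iff.mp hc with h | h
    · exact h
    · exact absurd h (Nat.cast_ne_zero.mpr (Nat.factorial_ne_zero _))
  · intro j hj hji
    have hj' : j ≤ r := Nat.lt_succ_iff.mp (Finset.mem_range.mp hj)
    have hne' : ¬(3 * r + 1 - 3 * i = 3 * r + 1 - 3 * j) := by omega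
    simp [hne']
  · intro h
    exact absurd (Finset.mem_range.mpr (Nat.lt_succ_of_le hi)) h
end

section
/- Let ζ be a primitive cube root of unity and f ∈ ℂ[x] a polynomial satisfying f(ζx) = ζ f(x). If (x-1)^{m} divides f(x), then (x³-1)^{m} divides f(x). -/
open Polynomial

lemma stmt4_aux (ζ : ℂ) (h3 : ζ ^ 3 = 1) (h0 : ζ ≠ 0) (f : ℂ[X]) (m : ℕ)
    (hcomp : f.comp (C ζ * X) = C ζ * f) (a : ℂ)
    (h : (X - C a) ^ m ∣ f) : (X - C (ζ ^ 2 * a)) ^ m ∣ f := by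
  obtain ⟨g, hg⟩ := h
  have hfac : (X - C a).comp (C ζ * X) = C ζ * (X - C (ζ ^ 2 * a)) := by
    have : ζ * (ζ ^ 2 * a) = a := by
      rw [← mul_assoc, ← pow_succ']
      rw [h3, one_mul]
    rw [sub_comp, C_comp, X_comp, mul_sub, ← C_mul, this]
  have key : C ζ * f = (C ζ) ^ m * ((X - C (ζ ^ 2 * a)) ^ m * g.comp (C ζ * X)) := by
    rw [← hcomp, hg, mul_comp, pow_comp, hfac, mul_pow]
    ring
  have hunit : IsUnit (C ζ : ℂ[X]) := isUnit_C.mpr (Ne.isUnit h0)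
  have : (X - C (ζ ^ 2 * a)) ^ m ∣ C ζ * f := ⟨(C ζ) ^ m * g.comp (C ζ * X), by rw [key]; ring⟩
  exact (hunit.dvd_mul_left).mp this

/-- If ζ is a primitive cube root of unity, f ∈ ℂ[x] satisfies f(ζx) = ζf(x),
and (x-1)^m ∣ f, then (x³-1)^m ∣ f. -/
theorem stmt4 (ζ : ℂ) (hζ : IsPrimitiveRoot ζ 3) (f : ℂ[X]) (m : ℕ)
    (hcomp : f.comp (C ζ * X) = C ζ * f)
    (hdvd : (X - 1) ^ m ∣ f) :
    (X ^ 3 - 1) ^ m ∣ f := by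
  have h3 : ζ ^ 3 = 1 := hζ.pow_eq_one
  have h0 : ζ ≠ 0 := fun h => by simp [h] at h3
  have hne1 : ζ ≠ 1 := hζ.ne_one (by norm_num)
  have hsum : ζ ^ 2 + ζ + 1 = 0 := by
    have : (ζ - 1) * (ζ ^ 2 + ζ + 1) = 0 := by linear_combination h3
    rcases mul_eq_zero.mp this with h | h
    · exact absurd (sub_eq_zero.mp h) hne1
    · exact h
  have hdvd1 : (X - C (1 : ℂ)) ^ m ∣ f := by simpa using hdvd
  have hdvd2 : (X - C (ζ ^ 2)) ^ m ∣ f := by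
    simpa using stmt4_aux ζ h3 h0 f m hcomp 1 hdvd1
  have hdvd3 : (X - C ζ) ^ m ∣ f := by
    have := stmt4_aux ζ h3 h0 f m hcomp (ζ ^ 2) hdvd2
    have hz4 : ζ ^ 2 * ζ ^ 2 = ζ := by
      have : ζ ^ 2 * ζ ^ 2 = ζ ^ 3 * ζ := by ring
      rw [this, h3, one_mul]
    rwa [hz4] at this
  -- distinctness
  have hzne : ζ ≠ -1 := by
    intro h
    rw [h] at h3
    norm_num at h3
  have hne2 : (1 : ℂ) ≠ ζ ^ 2 := by
    intro h
    have : (ζ - 1) * (ζ + 1) = 0 := by linear_combination -h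
    rcases mul_eq_zero.mp this with h' | h'
    · exact hne1 (sub_eq_zero.mp h')
    · exact hzne (by linear_combination h')
  have hne3 : ζ ≠ ζ ^ 2 := by
    intro h
    have : ζ * (ζ - 1) = 0 := by linear_combination -h
    rcases mul_eq_zero.mp this with h' | h'
    · exact h0 h'
    · exact hne1 (sub_eq_zero.mp h')
  -- coprimality
  have c12 : IsCoprime (X - C (1 : ℂ)) (X - C ζ) :=
    Polynomial.isCoprime_X_sub_C_of_isUnit_sub ((sub_ne_zero.mpr hne1.symm).isUnit)
  have c13 : IsCoprime (X - C (1 : ℂ)) (X - C (ζ ^ 2)) :=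
    Polynomial.isCoprime_X_sub_C_of_isUnit_sub ((sub_ne_zero.mpr hne2).isUnit)
  have c23 : IsCoprime (X - C ζ) (X - C (ζ ^ 2)) :=
    Polynomial.isCoprime_X_sub_C_of_isUnit_sub ((sub_ne_zero.mpr hne3).isUnit)
  have inner : ((X - C ζ) * (X - C (ζ ^ 2))) ^ m ∣ f := by
    rw [mul_pow]
    exact (c23.pow).mul_dvd hdvd3 hdvd2
  have hbig : ((X - C (1 : ℂ)) * ((X - C ζ) * (X - C (ζ ^ 2)))) ^ m ∣ f := by
    rw [mul_pow]
    exact ((c12.mul_right c13).pow).mul_dvd hdvd1 inner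
  have hfac : (X - C (1 : ℂ)) * ((X - C ζ) * (X - C (ζ ^ 2))) = X ^ 3 - 1 := by
    have hc3 : (C ζ : ℂ[X]) ^ 3 = 1 := by simpa using congrArg C h3
    have hcsum : (C ζ : ℂ[X]) ^ 2 + C ζ + 1 = 0 := by simpa using congrArg C hsum
    rw [C_pow, C_1]
    linear_combination (-(X : ℂ[X]) ^ 2 + C ζ * X) * hcsum - hc3
  rwa [hfac] at hbig
end

section
/- Let r₃, r₅ be nonnegative integers with r₃ < r₅, and suppose complex numbers w_0, w_1, …, w_{r₃} satisfy Σ_{i=0}^{min(r₅-j, r₃)} C(r₅-i, j) w_i = 0 for every 0 ≤ j ≤ r₃, where C(n,k) is the binomial coefficient. Then w_i = 0 for all i. -/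
/-!
The hypotheses say that the Hasse derivatives of orders `0, …, r₃` of
`f = ∑ᵢ wᵢ X^(r₅ - i)` vanish at `1`, i.e. the Taylor expansion of `f` at `1` starts in degree
`r₃ + 1`, so `(X - 1)^(r₃ + 1) ∣ f`. Also `X^(r₅ - r₃) ∣ f`, and these two factors are coprime
with product of degree `r₅ + 1 > deg f`; hence `f = 0`, and its coefficients `wᵢ` vanish.
-/

open Polynomial Finset

namespace Polynomial

theorem X_sub_C_pow_dvd_iff_forall_hasseDeriv_eval_eq_zero {R : Type*} [CommRing R] (r : R)
    (f : R[X]) (n : ℕ) :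
    (X - C r) ^ n ∣ f ↔ ∀ k < n, (hasseDeriv k f).eval r = 0 := by
  have hX : taylor r ((X - C r) ^ n) = X ^ n := by simp [taylor_X, taylor_C]
  rw [← map_dvd_iff (taylorEquiv r)]
  change taylor r _ ∣ taylor r f ↔ _
  simp only [hX, X_pow_dvd_iff, taylor_coeff]

theorem eq_zero_of_X_pow_dvd_of_X_sub_C_pow_dvd {K : Type*} [Field K] {a : K} (ha : a ≠ 0)
    {f : K[X]} {k m : ℕ} (hk : X ^ k ∣ f) (hm : (X - C a) ^ m ∣ f)
    (hdeg : f.natDegree < k + m) : f = 0 := by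
  have hcop : IsCoprime (X : K[X]) (X - C a) := by
    simpa using isCoprime_X_sub_C_of_isUnit_sub (R := K) (a := 0) (b := a) (by simpa using ha)
  refine eq_zero_of_dvd_of_natDegree_lt (hcop.pow.mul_dvd hk hm) ?_
  rwa [(monic_X.pow k).natDegree_mul ((monic_X_sub_C a).pow m), natDegree_pow, natDegree_pow,
    natDegree_X, natDegree_X_sub_C, mul_one, mul_one]

section TopCoeffPoly

variable {R : Type*} [Semiring R] (n m : ℕ) (w : ℕ → R)

noncomputable def topCoeffPoly : R[X] :=
  ∑ i ∈ range (m + 1), monomial (n - i) (w i)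

theorem coeff_topCoeffPoly {i : ℕ} (hi : i ≤ m) (hmn : m ≤ n) :
    (topCoeffPoly n m w).coeff (n - i) = w i := by
  rw [topCoeffPoly, finsetSum_coeff, sum_eq_single_of_mem i (mem_range.2 (by omega))]
  · exact coeff_monomial_same _ _
  · intro l hl hli
    rw [mem_range] at hl
    exact coeff_monomial_of_ne _ (by omega)

theorem natDegree_topCoeffPoly_le : (topCoeffPoly n m w).natDegree ≤ n :=
  natDegree_sum_le_of_forall_le _ _ fun i _ ↦ (natDegree_monomial_le _).trans (Nat.sub_le n i)

theorem X_pow_dvd_topCoeffPoly : (X : R[X]) ^ (n - m) ∣ topCoeffPoly n m w := by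
  refine dvd_sum fun i hi ↦ ?_
  rw [mem_range] at hi
  rw [← C_mul_X_pow_eq_monomial, ← X_pow_mul]
  exact dvd_mul_of_dvd_left (pow_dvd_pow X (by omega)) _

theorem eval_one_hasseDeriv_topCoeffPoly (j : ℕ) :
    (hasseDeriv j (topCoeffPoly n m w)).eval 1 =
      ∑ i ∈ range (m + 1), ((n - i).choose j : R) * w i := by
  simp only [topCoeffPoly, map_sum, eval_finsetSum, hasseDeriv_monomial, eval_monomial, one_pow,
    mul_one]

end TopCoeffPoly

end Polynomial

theorem sum_range_min_sub_choose_mul {R : Type*} [Semiring R] {n m : ℕ} (hmn : m ≤ n) (j : ℕ)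
    (w : ℕ → R) :
    ∑ i ∈ range (min (n - j) m + 1), ((n - i).choose j : R) * w i =
      ∑ i ∈ range (m + 1), ((n - i).choose j : R) * w i := by
  refine sum_subset (fun i hi ↦ ?_) fun i hi hi' ↦ ?_
  · simp only [mem_range] at hi ⊢
    omega
  · simp only [mem_range] at hi hi'
    rw [Nat.choose_eq_zero_of_lt (show n - i < j by omega), Nat.cast_zero, zero_mul]

/-- if r₃ < r₅ and Σ_{i=0}^{min(r₅-j,r₃)} C(r₅-i, j) w_i = 0 for all 0 ≤ j ≤ r₃,
then all w_i vanish (0 ≤ i ≤ r₃). -/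
theorem stmt5 (r₃ r₅ : ℕ) (h : r₃ < r₅) (w : ℕ → ℂ)
    (hsum : ∀ j ≤ r₃,
      ∑ i ∈ Finset.range (min (r₅ - j) r₃ + 1), ((r₅ - i).choose j : ℂ) * w i = 0) :
    ∀ i ≤ r₃, w i = 0 := by
  have hroot : (X - C 1) ^ (r₃ + 1) ∣ topCoeffPoly r₅ r₃ w := by
    rw [X_sub_C_pow_dvd_iff_forall_hasseDeriv_eval_eq_zero]
    intro j hj
    rw [eval_one_hasseDeriv_topCoeffPoly, ← sum_range_min_sub_choose_mul h.le]
    exact hsum j (by omega)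
  have hzero : topCoeffPoly r₅ r₃ w = 0 :=
    eq_zero_of_X_pow_dvd_of_X_sub_C_pow_dvd one_ne_zero (X_pow_dvd_topCoeffPoly r₅ r₃ w) hroot
      ((natDegree_topCoeffPoly_le r₅ r₃ w).trans_lt (by omega))
  intro i hi
  rw [← coeff_topCoeffPoly r₅ r₃ w hi h.le, hzero, coeff_zero]
end

section
/- Let g be a Lie algebra over ℂ containing elements e, f₃, f₂, f₁, f₀ with brackets [e, f₃] = f₂, [e, f₂] = f₁, [e, f₁] = f₀, [e, f₀] = 0, and [f₁, f₂] = 6h with h central among {f₀,f₁,f₂,f₃} and [e,h]=0 not assumed; assume moreover [f₂, f₂] = 0 trivially and that f₂ commutes with h. Then in the universal enveloping algebra U(g), for every q ≥ 0: e·f₂^{(q)} ≡ 3h·f₂^{(q-2)} modulo the left ideal generated by e, f₀, and f₁, where x^{(p)} = x^p/p!, with the convention x^{(p)} = 0 for p < 0. -/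
/-!
Since `[e, f₂] = f₁`, commuting `e` to the right through `f₂^q` leaves one `f₁` behind for each
factor of `f₂`; pushing each of those `f₁` further to the right through the remaining `f₂`'s
produces `[f₁, f₂] = 6h`, which commutes with `f₂`. Hence
`e f₂^q = f₂^q e + q f₂^(q-1) f₁ + C(q,2) · 6h f₂^(q-2)`. The first two terms lie in the left
ideal, and `C(q,2) · 6 / q! = 3 / (q-2)!`.
-/

open UniversalEnvelopingAlgebra

section CommutatorFormula

variable {A : Type*} [Ring A] {e f f₁ k : A}

theorem mul_pow_add_two_eq (hef : e * f = f * e + f₁) (hf₁f : f₁ * f = f * f₁ + k)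
    (hkf : Commute k f) (n : ℕ) :
    e * f ^ (n + 2) =
      f ^ (n + 2) * e + (n + 2) • (f ^ (n + 1) * f₁) + (n + 2).choose 2 • (k * f ^ n) := by
  induction n with
  | zero =>
    calc e * f ^ 2 = (f * e + f₁) * f := by rw [sq, ← mul_assoc, hef]
      _ = f ^ 2 * e + 2 • (f * f₁) + k := by
        rw [add_mul, mul_assoc, hef, hf₁f, sq, mul_add, mul_assoc]; abel
      _ = _ := by simp
  | succ n ih =>
    have hchoose : (n + 1 + 2).choose 2 = (n + 2).choose 2 + (n + 2) := by
      rw [Nat.choose_succ_succ', Nat.choose_one_right, add_comm]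
    calc e * f ^ (n + 1 + 2) = (e * f ^ (n + 2)) * f := by rw [mul_assoc, ← pow_succ]
      _ = f ^ (n + 2) * (e * f) + (n + 2) • (f ^ (n + 1) * (f₁ * f))
            + (n + 2).choose 2 • (k * f ^ (n + 1)) := by
        simp only [ih, add_mul, smul_mul_assoc, mul_assoc, ← pow_succ]
      _ = f ^ (n + 1 + 2) * e + (n + 1 + 2) • (f ^ (n + 1 + 1) * f₁)
            + (n + 1 + 2).choose 2 • (k * f ^ (n + 1)) := by
        rw [hef, hf₁f, mul_add, mul_add, ← (hkf.pow_right (n + 1)).eq, hchoose]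
        simp only [← mul_assoc, ← pow_succ]
        module

/-- For `q < 2` the truncated exponent `q - 2` is harmless: its coefficient `q.choose 2` is `0`. -/
theorem mul_pow_sub_choose_two_smul_mem {I : Submodule A A} (he : e ∈ I) (hf₁ : f₁ ∈ I)
    (hef : e * f = f * e + f₁) (hf₁f : f₁ * f = f * f₁ + k) (hkf : Commute k f) (q : ℕ) :
    e * f ^ q - q.choose 2 • (k * f ^ (q - 2)) ∈ I := by
  match q with
  | 0 => simpa using he
  | 1 => simpa [hef] using add_mem (I.smul_mem f he) hf₁
  | n + 2 =>
    rw [mul_pow_add_two_eq hef hf₁f hkf, Nat.add_sub_cancel, add_sub_cancel_right]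
    exact add_mem (I.smul_mem _ he) (I.smul_of_tower_mem _ (I.smul_mem _ hf₁))

end CommutatorFormula

theorem inv_factorial_add_two_mul_choose_two {K : Type*} [Field K] [CharZero K] (n : ℕ) :
    ((n + 2).factorial : K)⁻¹ * (n + 2).choose 2 = (2 * n.factorial : K)⁻¹ := by
  have hchoose : ((n + 2).choose 2 : K) ≠ 0 := Nat.cast_ne_zero.2 (Nat.choose_pos (by omega)).ne'
  rw [← Nat.add_choose_mul_factorial_mul_factorial n 2]
  push_cast
  field_simp
  norm_num

section

attribute [local instance 100] LieRing.ofAssociativeRing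

theorem UniversalEnvelopingAlgebra.ι_mul_ι {R L : Type*} [CommRing R] [LieRing L]
    [LieAlgebra R L] (x y : L) : ι R x * ι R y = ι R y * ι R x + ι R ⁅x, y⁆ := by
  rw [LieHom.map_lie, Ring.lie_def, add_sub_cancel]

end

theorem stmt9_general {L : Type*} [LieRing L] [LieAlgebra ℂ L]
    (e f₂ f₁ f₀ h : L)
    (h2 : ⁅e, f₂⁆ = f₁)
    (hbr : ⁅f₁, f₂⁆ = (6 : ℤ) • h)
    (hc2 : ⁅h, f₂⁆ = 0)
    (q : ℕ) :
    ((q.factorial : ℂ)⁻¹ • (ι ℂ e * (ι ℂ f₂) ^ q)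
        - (if 2 ≤ q then ((q - 2).factorial : ℂ)⁻¹ • (3 * ι ℂ h * (ι ℂ f₂) ^ (q - 2)) else 0))
      ∈ Submodule.span (UniversalEnvelopingAlgebra ℂ L)
          ({ι ℂ e, ι ℂ f₀, ι ℂ f₁} : Set (UniversalEnvelopingAlgebra ℂ L)) := by
  set I := Submodule.span (UniversalEnvelopingAlgebra ℂ L)
    ({ι ℂ e, ι ℂ f₀, ι ℂ f₁} : Set (UniversalEnvelopingAlgebra ℂ L))
  have hef : ι ℂ e * ι ℂ f₂ = ι ℂ f₂ * ι ℂ e + ι ℂ f₁ := by rw [ι_mul_ι, h2]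
  have hf₁f : ι ℂ f₁ * ι ℂ f₂ = ι ℂ f₂ * ι ℂ f₁ + (6 : ℤ) • ι ℂ h := by
    rw [ι_mul_ι, hbr, map_zsmul]
  have hhf : Commute (ι ℂ h) (ι ℂ f₂) := by
    rw [commute_iff_eq, ι_mul_ι, hc2, map_zero, add_zero]
  have hmem := mul_pow_sub_choose_two_smul_mem (I := I) (Submodule.subset_span (by simp))
    (Submodule.subset_span (by simp)) hef hf₁f (hhf.smul_left 6) q
  convert I.smul_of_tower_mem (q.factorial : ℂ)⁻¹ hmem using 1
  rcases lt_or_ge q 2 with hq | hq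
  · simp [hq, Nat.choose_eq_zero_of_lt hq]
  obtain ⟨n, rfl⟩ := Nat.exists_eq_add_of_le' hq
  rw [if_pos hq, Nat.add_sub_cancel, smul_sub, mul_assoc, smul_mul_assoc,
    ← map_ofNat (algebraMap ℂ _) 3, ← Algebra.smul_def]
  congr 1
  match_scalars
  linear_combination (-6 : ℂ) * inv_factorial_add_two_mul_choose_two (K := ℂ) n

/-- in U(g), with [e,f₃]=f₂, [e,f₂]=f₁, [e,f₁]=f₀, [e,f₀]=0, [f₁,f₂]=6h,
h commuting with f₀,f₁,f₂,f₃, for every q ≥ 0 one has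
e·f₂^{(q)} ≡ 3h·f₂^{(q-2)} modulo the left ideal U(g)(ℂe + ℂf₀ + ℂf₁),
where x^{(p)} = x^p/p! and x^{(p)} = 0 for p < 0. -/
theorem stmt9 {L : Type*} [LieRing L] [LieAlgebra ℂ L]
    (e f₃ f₂ f₁ f₀ h : L)
    (h3 : ⁅e, f₃⁆ = f₂) (h2 : ⁅e, f₂⁆ = f₁) (h1 : ⁅e, f₁⁆ = f₀) (h0 : ⁅e, f₀⁆ = 0)
    (hbr : ⁅f₁, f₂⁆ = (6 : ℤ) • h)
    (hc0 : ⁅h, f₀⁆ = 0) (hc1 : ⁅h, f₁⁆ = 0) (hc2 : ⁅h, f₂⁆ = 0) (hc3 : ⁅h, f₃⁆ = 0)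
    (q : ℕ) :
    ((q.factorial : ℂ)⁻¹ • (ι ℂ e * (ι ℂ f₂) ^ q)
        - (if 2 ≤ q then ((q - 2).factorial : ℂ)⁻¹ • (3 * ι ℂ h * (ι ℂ f₂) ^ (q - 2)) else 0))
      ∈ Submodule.span (UniversalEnvelopingAlgebra ℂ L)
          ({ι ℂ e, ι ℂ f₀, ι ℂ f₁} : Set (UniversalEnvelopingAlgebra ℂ L)) :=
  stmt9_general e f₂ f₁ f₀ h h2 hbr hc2 q
end

section
/- With the setting of the previous statement (Lie algebra elements e, f₃, f₂, f₁, f₀, h with [e,f₃]=f₂, [e,f₂]=f₁, [e,f₁]=f₀, [f₁,f₂]=6h, h and f₃ commuting with f₂, f₃, h and with each other, and [e,h]=[e,f₀]=0... as in type G_2), for all p, q ≥ 0 one has in U(g): e^{(p)} f₃^{(q)} ≡ Σ_i h^{(i)} f₃^{(q-p+i)} f₂^{(p-3i)} modulo the left ideal U(g)(ℂe + ℂf₀ + ℂf₁), where i ranges over max{0, p-q} ≤ i ≤ ⌊p/3⌋. -/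
/-!
Pass to the cyclic module `U ⧸ I` generated by `v = 1 mod I`, which is killed by `e` and `f₁`.
With divided powers `x⁽ⁿ⁾` that vanish for `n < 0`, the relations give, for all integers `a, b, c`,
`e • h⁽ᵃ⁾f₃⁽ᵇ⁾f₂⁽ᶜ⁾ • v = (c+1) • h⁽ᵃ⁾f₃⁽ᵇ⁻¹⁾f₂⁽ᶜ⁺¹⁾ • v + 3(a+1) • h⁽ᵃ⁺¹⁾f₃⁽ᵇ⁾f₂⁽ᶜ⁻²⁾ • v`,
where the second term comes from `e • f₂⁽ᶜ⁾ • v = 3 • h f₂⁽ᶜ⁻²⁾ • v`, a consequence of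
`[f₁, f₂] = 6h`. Applying `e` to the expansion of `e⁽ᵖ⁾ f₃⁽q⁾ • v`, the `a`-th term of the
expansion for `p + 1` is collected with coefficient `(p + 1 - 3a) + 3a = p + 1`, which matches
`e e⁽ᵖ⁾ = (p + 1) e⁽ᵖ⁺¹⁾`; so the expansion follows by induction on `p`.
-/

open scoped Nat

section DividedPower

variable (K : Type*) {R : Type*} [Field K] [Ring R] [Algebra K R]

-- Integer exponents let the commutation formulas below hold without case distinctions.
def dpow (x : R) : ℤ → R
  | (n : ℕ) => ((n ! : ℕ) : K)⁻¹ • x ^ n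
  | Int.negSucc _ => 0

variable {K}

theorem dpow_natCast (x : R) (n : ℕ) : dpow K x n = ((n ! : ℕ) : K)⁻¹ • x ^ n := rfl

theorem dpow_of_neg (x : R) {n : ℤ} (hn : n < 0) : dpow K x n = 0 := by
  rcases n with n | n
  · exact ((Int.natCast_nonneg n).not_gt hn).elim
  · rfl

@[simp]
theorem dpow_zero (x : R) : dpow K x 0 = 1 := by simpa using dpow_natCast (K := K) x 0

theorem dpow_natCast_mul_dpow_natCast (x y : R) (m n : ℕ) :
    dpow K x m * dpow K y n = ((m ! * n ! : ℕ) : K)⁻¹ • (x ^ m * y ^ n) := by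
  rw [dpow_natCast, dpow_natCast, smul_mul_smul, Nat.cast_mul, mul_inv]

open Finset in
theorem sum_range_dpow_eq_sum_Icc (h f₃ f₂ : R) (p q : ℕ) :
    ∑ a ∈ range (p + 1), dpow K h a * dpow K f₃ (q + a - p : ℤ) * dpow K f₂ (p - 3 * a : ℤ)
      = ∑ i ∈ Icc (p - q) (p / 3), ((i ! * (q + i - p)! * (p - 3 * i)! : ℕ) : K)⁻¹ •
          (h ^ i * f₃ ^ (q + i - p) * f₂ ^ (p - 3 * i)) := by
  have hsub : Icc (p - q) (p / 3) ⊆ range (p + 1) := fun i hi => by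
    simp only [mem_Icc, mem_range] at hi ⊢
    omega
  refine (sum_subset hsub fun i _ hi => ?_).symm.trans (sum_congr rfl fun i hi => ?_)
  · simp only [mem_Icc, not_and_or, not_le] at hi
    rcases hi with hi | hi
    · rw [dpow_of_neg f₃ (by omega), mul_zero, zero_mul]
    · rw [dpow_of_neg f₂ (by omega), mul_zero]
  · simp only [mem_Icc] at hi
    rw [show (q + i - p : ℤ) = (q + i - p : ℕ) by omega,
      show (p - 3 * i : ℤ) = (p - 3 * i : ℕ) by omega, dpow_natCast_mul_dpow_natCast,
      dpow_natCast, smul_mul_smul, ← mul_inv, ← Nat.cast_mul]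

theorem Commute.dpow_left {x y : R} (hxy : Commute x y) (n : ℤ) : Commute (dpow K x n) y := by
  rcases n with n | n
  · exact (hxy.pow_left n).smul_left _
  · exact Commute.zero_left y

theorem Commute.dpow_right {x y : R} (hxy : Commute x y) (n : ℤ) : Commute x (dpow K y n) :=
  (hxy.symm.dpow_left n).symm

variable [CharZero K]

theorem mul_dpow (x : R) (n : ℤ) : x * dpow K x n = ((n + 1 : ℤ) : K) • dpow K x (n + 1) := by
  rcases n with n | _ | n
  · rw [Int.ofNat_eq_natCast, ← Nat.cast_succ, dpow_natCast, dpow_natCast, mul_smul_comm,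
      smul_smul, pow_succ' x n, Nat.factorial_succ]
    congr 1
    push_cast
    field_simp
  · simp [dpow_of_neg]
  · rw [dpow_of_neg x (Int.negSucc_lt_zero _), dpow_of_neg x (by omega), mul_zero, smul_zero]

theorem mul_dpow_of_mul_eq_add {x y z : R} (hxy : x * y = y * x + z) (hyz : Commute y z) (n : ℤ) :
    x * dpow K y n = dpow K y n * x + dpow K y (n - 1) * z := by
  induction n using Int.inductionOn' (b := 0) with
  | zero => simp [dpow_of_neg]
  | succ k hk ih =>
    have hk1 : ((k + 1 : ℤ) : K) ≠ 0 := by exact_mod_cast (by omega : k + 1 ≠ 0)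
    refine smul_right_injective R hk1 ?_
    dsimp only
    calc ((k + 1 : ℤ) : K) • (x * dpow K y (k + 1))
        = (y * x + z) * dpow K y k := by rw [← mul_smul_comm, ← mul_dpow, ← mul_assoc, hxy]
      _ = y * (dpow K y k * x + dpow K y (k - 1) * z) + dpow K y k * z := by
        rw [add_mul, mul_assoc, ih, (hyz.dpow_left k).eq]
      _ = ((k + 1 : ℤ) : K) • (dpow K y (k + 1) * x + dpow K y (k + 1 - 1) * z) := by
        rw [mul_add, ← mul_assoc, ← mul_assoc, mul_dpow, mul_dpow, sub_add_cancel,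
          add_sub_cancel_right, smul_mul_assoc, smul_mul_assoc]
        push_cast
        module
  | pred k hk _ => rw [dpow_of_neg y (by omega), dpow_of_neg y (by omega)]; simp

end DividedPower

section G₂

variable {R : Type*} [Ring R]

structure G₂Relations (e f₃ f₂ f₁ h : R) : Prop where
  e_f₃ : e * f₃ = f₃ * e + f₂
  e_f₂ : e * f₂ = f₂ * e + f₁
  f₁_f₂ : f₁ * f₂ = f₂ * f₁ + (6 : ℤ) • h
  e_h : Commute e h
  h_f₂ : Commute h f₂
  h_f₃ : Commute h f₃
  f₃_f₂ : Commute f₃ f₂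

variable {K M : Type*} [Field K] [CharZero K] [Algebra K R]
  [AddCommGroup M] [Module R M] [Module K M] [IsScalarTower K R M]

theorem e_smul_dpow_f₂_smul {e f₂ f₁ h : R} (he₂ : e * f₂ = f₂ * e + f₁)
    (h₁₂ : f₁ * f₂ = f₂ * f₁ + (6 : ℤ) • h) (hh₂ : Commute h f₂) {v : M} (hev : e • v = 0)
    (hf₁v : f₁ • v = 0) (n : ℤ) :
    e • dpow K f₂ n • v = (3 : K) • h • dpow K f₂ (n - 2) • v := by
  induction n using Int.inductionOn' (b := 0) with
  | zero => simp [hev, dpow_of_neg]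
  | succ k hk ih =>
    have hk1 : ((k + 1 : ℤ) : K) ≠ 0 := by exact_mod_cast (by omega : k + 1 ≠ 0)
    have h₁₂' : f₁ * f₂ = f₂ * f₁ + (6 : K) • h := by
      rw [h₁₂, ← Int.cast_smul_eq_zsmul K]; norm_num
    have hf₁ : f₁ • dpow K f₂ k • v = (6 : K) • h • dpow K f₂ (k - 1) • v := by
      rw [← mul_smul, mul_dpow_of_mul_eq_add h₁₂' (hh₂.symm.smul_right _), mul_smul_comm,
        (hh₂.symm.dpow_left _).eq, add_smul, mul_smul, hf₁v, smul_zero, zero_add, smul_assoc,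
        mul_smul]
    refine smul_right_injective M hk1 ?_
    dsimp only
    calc ((k + 1 : ℤ) : K) • e • dpow K f₂ (k + 1) • v
        = e • (f₂ * dpow K f₂ k) • v := by rw [mul_dpow, smul_assoc, smul_comm]
      _ = f₂ • e • dpow K f₂ k • v + f₁ • dpow K f₂ k • v := by
        rw [mul_smul, ← mul_smul e, he₂, add_smul, mul_smul]
      _ = (3 : K) • h • (f₂ * dpow K f₂ (k - 2)) • v + (6 : K) • h • dpow K f₂ (k - 1) • v := by
        rw [ih, hf₁, smul_comm f₂ (3 : K), ← mul_smul f₂ h, ← hh₂.eq, mul_smul h, ← mul_smul f₂]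
      _ = ((k + 1 : ℤ) : K) • (3 : K) • h • dpow K f₂ (k + 1 - 2) • v := by
        rw [mul_dpow, show k - 2 + 1 = k + 1 - 2 by ring, show k - 1 = k + 1 - 2 by ring,
          smul_assoc, smul_comm h]
        generalize h • dpow K f₂ (k + 1 - 2) • v = w
        push_cast
        module
  | pred k hk _ => rw [dpow_of_neg f₂ (by omega), dpow_of_neg f₂ (by omega)]; simp

theorem G₂Relations.e_smul_monomial_smul {e f₃ f₂ f₁ h : R} (hrel : G₂Relations e f₃ f₂ f₁ h)
    {v : M} (hev : e • v = 0) (hf₁v : f₁ • v = 0) (a b c : ℤ) :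
    e • (dpow K h a * dpow K f₃ b * dpow K f₂ c) • v
      = ((c + 1 : ℤ) : K) • (dpow K h a * dpow K f₃ (b - 1) * dpow K f₂ (c + 1)) • v
        + ((3 * (a + 1) : ℤ) : K) • (dpow K h (a + 1) * dpow K f₃ b * dpow K f₂ (c - 2)) • v := by
  have hh : dpow K h a * h = ((a + 1 : ℤ) : K) • dpow K h (a + 1) := by
    rw [← mul_dpow, ((Commute.refl h).dpow_left a).eq]
  calc e • (dpow K h a * dpow K f₃ b * dpow K f₂ c) • v
      = (dpow K h a * (e * dpow K f₃ b)) • dpow K f₂ c • v := by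
        rw [← mul_smul, ← mul_assoc, ← mul_assoc, (hrel.e_h.dpow_right a).eq, mul_assoc _ e,
          mul_smul]
    _ = (dpow K h a * dpow K f₃ b) • e • dpow K f₂ c • v
          + (dpow K h a * dpow K f₃ (b - 1)) • (f₂ * dpow K f₂ c) • v := by
        rw [mul_dpow_of_mul_eq_add hrel.e_f₃ hrel.f₃_f₂, mul_add, add_smul, ← mul_assoc,
          ← mul_assoc]
        simp only [mul_smul]
    _ = (3 : K) • (dpow K h a * dpow K f₃ b * h) • dpow K f₂ (c - 2) • v
          + ((c + 1 : ℤ) : K) • (dpow K h a * dpow K f₃ (b - 1)) • dpow K f₂ (c + 1) • v := by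
        rw [e_smul_dpow_f₂_smul hrel.e_f₂ hrel.f₁_f₂ hrel.h_f₂ hev hf₁v, mul_dpow, smul_assoc,
          smul_comm _ (3 : K), smul_comm _ ((c + 1 : ℤ) : K), ← mul_smul, add_comm]
    _ = _ := by
        rw [mul_assoc, ← (hrel.h_f₃.dpow_right b).eq, ← mul_assoc, hh, add_comm]
        simp only [smul_mul_assoc, mul_smul, smul_assoc, Int.cast_mul, Int.cast_ofNat]

open Finset in
theorem G₂Relations.dpow_e_mul_dpow_f₃_smul {e f₃ f₂ f₁ h : R} (hrel : G₂Relations e f₃ f₂ f₁ h)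
    {v : M} (hev : e • v = 0) (hf₁v : f₁ • v = 0) (p q : ℕ) :
    (dpow K e p * dpow K f₃ q) • v
      = (∑ a ∈ range (p + 1),
          dpow K h a * dpow K f₃ (q + a - p : ℤ) * dpow K f₂ (p - 3 * a : ℤ)) • v := by
  induction p with
  | zero => simp
  | succ p ih =>
    let T (a : ℕ) : M :=
      (dpow K h a * dpow K f₃ (q + a - (p + 1 : ℕ) : ℤ) * dpow K f₂ ((p + 1 : ℕ) - 3 * a : ℤ)) • v
    have hstep (a : ℕ) :
        e • (dpow K h a * dpow K f₃ (q + a - p : ℤ) * dpow K f₂ (p - 3 * a : ℤ)) • v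
          = ((p : K) + 1 - 3 * a) • T a + (3 * ((a + 1 : ℕ) : K)) • T (a + 1) := by
      rw [hrel.e_smul_monomial_smul hev hf₁v]
      simp only [T]
      push_cast
      ring_nf
    have hlast : T (p + 1) = 0 := by
      simp only [T]
      rw [dpow_of_neg f₂ (by omega), mul_zero, zero_smul]
    refine smul_right_injective M (Nat.cast_add_one_ne_zero p : (p : K) + 1 ≠ 0) ?_
    dsimp only
    rw [sum_smul]
    calc ((p : K) + 1) • (dpow K e (p + 1 : ℕ) * dpow K f₃ q) • v
        = e • (dpow K e p * dpow K f₃ q) • v := by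
          rw [← mul_smul, ← mul_assoc, mul_dpow, smul_mul_assoc, smul_assoc]
          push_cast
          rfl
      _ = ∑ a ∈ range (p + 1),
            (((p : K) + 1 - 3 * a) • T a + (3 * ((a + 1 : ℕ) : K)) • T (a + 1)) := by
          rw [ih, sum_smul, smul_sum]
          exact sum_congr rfl fun a _ => hstep a
      _ = ∑ a ∈ range (p + 2), (((p : K) + 1 - 3 * a) • T a + (3 * (a : K)) • T a) := by
          rw [sum_add_distrib, sum_add_distrib, sum_range_succ _ (p + 1), hlast,
            sum_range_succ' (fun a => (3 * (a : K)) • T a)]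
          simp
      _ = ((p : K) + 1) • ∑ a ∈ range (p + 2), T a := by
          rw [smul_sum]
          exact sum_congr rfl fun a _ => by rw [← add_smul, sub_add_cancel]

end G₂

namespace UniversalEnvelopingAlgebra

variable {R L : Type*} [CommRing R] [LieRing L] [LieAlgebra R L]

theorem ι_mul_ι_s10 (x y : L) : ι R x * ι R y = ι R y * ι R x + ι R ⁅x, y⁆ := by
  let _ : LieRing (UniversalEnvelopingAlgebra R L) := LieRing.ofAssociativeRing
  rw [LieHom.map_lie, LieRing.of_associative_ring_bracket]
  abel

theorem commute_ι_of_lie_eq_zero {x y : L} (hxy : ⁅x, y⁆ = 0) : Commute (ι R x) (ι R y) := by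
  rw [Commute, SemiconjBy, ι_mul_ι_s10, hxy, map_zero, add_zero]

end UniversalEnvelopingAlgebra

namespace Submodule

variable {A : Type*} [Ring A] {I : Submodule A A}

theorem Quotient.smul_mk_one (r : A) : r • (Quotient.mk 1 : A ⧸ I) = Quotient.mk r := by
  rw [← Quotient.mk_smul, smul_eq_mul, mul_one]

theorem Quotient.smul_mk_one_eq_zero {a : A} (ha : a ∈ I) : a • (Quotient.mk 1 : A ⧸ I) = 0 := by
  rw [Quotient.smul_mk_one, Quotient.mk_eq_zero]
  exact ha

theorem sub_mem_iff_smul_mk_one_eq {x y : A} :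
    x - y ∈ I ↔ x • (Quotient.mk 1 : A ⧸ I) = y • Quotient.mk 1 := by
  rw [← Quotient.eq, Quotient.smul_mk_one, Quotient.smul_mk_one]

end Submodule

open UniversalEnvelopingAlgebra

theorem stmt10_general {L : Type*} [LieRing L] [LieAlgebra ℂ L]
    (e f₃ f₂ f₁ f₀ h : L)
    (h3 : ⁅e, f₃⁆ = f₂) (h2 : ⁅e, f₂⁆ = f₁)
    (heh : ⁅e, h⁆ = 0)
    (hbr : ⁅f₁, f₂⁆ = (6 : ℤ) • h)
    (hc2 : ⁅h, f₂⁆ = 0) (hc3 : ⁅h, f₃⁆ = 0)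
    (h32 : ⁅f₃, f₂⁆ = 0)
    (p q : ℕ) :
    (((p.factorial * q.factorial : ℕ) : ℂ)⁻¹ • ((ι ℂ e) ^ p * (ι ℂ f₃) ^ q)
        - ∑ i ∈ Finset.Icc (p - q) (p / 3),
            ((i.factorial * (q + i - p).factorial * (p - 3 * i).factorial : ℕ) : ℂ)⁻¹ •
              ((ι ℂ h) ^ i * (ι ℂ f₃) ^ (q + i - p) * (ι ℂ f₂) ^ (p - 3 * i)))
      ∈ Submodule.span (UniversalEnvelopingAlgebra ℂ L)
          ({ι ℂ e, ι ℂ f₀, ι ℂ f₁} : Set (UniversalEnvelopingAlgebra ℂ L)) := by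
  have hrel : G₂Relations (ι ℂ e) (ι ℂ f₃) (ι ℂ f₂) (ι ℂ f₁) (ι ℂ h) :=
    { e_f₃ := by rw [ι_mul_ι_s10, h3]
      e_f₂ := by rw [ι_mul_ι_s10, h2]
      f₁_f₂ := by rw [ι_mul_ι_s10, hbr, map_zsmul]
      e_h := commute_ι_of_lie_eq_zero heh
      h_f₂ := commute_ι_of_lie_eq_zero hc2
      h_f₃ := commute_ι_of_lie_eq_zero hc3
      f₃_f₂ := commute_ι_of_lie_eq_zero h32 }
  rw [Submodule.sub_mem_iff_smul_mk_one_eq, ← dpow_natCast_mul_dpow_natCast,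
    ← sum_range_dpow_eq_sum_Icc]
  exact hrel.dpow_e_mul_dpow_f₃_smul
    (Submodule.Quotient.smul_mk_one_eq_zero (Submodule.subset_span (by simp)))
    (Submodule.Quotient.smul_mk_one_eq_zero (Submodule.subset_span (by simp))) p q

/-- in U(g), with the G₂-type relations [e,f₃]=f₂, [e,f₂]=f₁, [e,f₁]=f₀,
[f₁,f₂]=6h, h and f₃ commuting with f₂,f₃,h and with each other, [e,h]=[e,f₀]=0,
for all p,q ≥ 0:
e^{(p)} f₃^{(q)} ≡ Σ_{max{0,p-q} ≤ i ≤ ⌊p/3⌋} h^{(i)} f₃^{(q-p+i)} f₂^{(p-3i)}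
modulo the left ideal U(g)(ℂe + ℂf₀ + ℂf₁). -/
theorem stmt10 {L : Type*} [LieRing L] [LieAlgebra ℂ L]
    (e f₃ f₂ f₁ f₀ h : L)
    (h3 : ⁅e, f₃⁆ = f₂) (h2 : ⁅e, f₂⁆ = f₁) (h1 : ⁅e, f₁⁆ = f₀)
    (h0 : ⁅e, f₀⁆ = 0) (heh : ⁅e, h⁆ = 0)
    (hbr : ⁅f₁, f₂⁆ = (6 : ℤ) • h)
    (hc2 : ⁅h, f₂⁆ = 0) (hc3 : ⁅h, f₃⁆ = 0)
    (h32 : ⁅f₃, f₂⁆ = 0)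
    (p q : ℕ) :
    (((p.factorial * q.factorial : ℕ) : ℂ)⁻¹ • ((ι ℂ e) ^ p * (ι ℂ f₃) ^ q)
        - ∑ i ∈ Finset.Icc (p - q) (p / 3),
            ((i.factorial * (q + i - p).factorial * (p - 3 * i).factorial : ℕ) : ℂ)⁻¹ •
              ((ι ℂ h) ^ i * (ι ℂ f₃) ^ (q + i - p) * (ι ℂ f₂) ^ (p - 3 * i)))
      ∈ Submodule.span (UniversalEnvelopingAlgebra ℂ L)
          ({ι ℂ e, ι ℂ f₀, ι ℂ f₁} : Set (UniversalEnvelopingAlgebra ℂ L)) :=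
  stmt10_general e f₃ f₂ f₁ f₀ h h3 h2 heh hbr hc2 hc3 h32 p q
end

section
/- Let H be the 3-dimensional Heisenberg Lie algebra with basis x, y, z, [x,y] = z, z central. Let V be an H-module and v ∈ V a vector with x^{k+1}v = 0 for some k ≥ 0. Then for all nonnegative integers a, b with a > k, the vector y^{b} z^{a} v lies in the span of the vectors x^{p} y^{q} z^{s} v with p > 0, q ≥ 0, 0 ≤ s ≤ k. -/
/-!
Since `⁅X, Y ^ (m + 1)⁆ = (m + 1) • Z Y ^ m`, moving `X ^ n` to the left of `Y ^ (r + n)`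
gives `Y ^ (r + n) X ^ n v ≡ (-1) ^ n (r + n)! / r! • Y ^ r Z ^ n v` modulo the span of the
vectors `X ^ p Y ^ q Z ^ s v` with `p > 0` and `s < n`. For `n = a > k` the left side vanishes,
so `Y ^ b Z ^ a v` lies in that span; the generators with `k < s < a` are absorbed by strong
induction on `a`, since the span is stable under `X`.
-/

theorem lie_pow_succ_of_lie_eq_of_commute {A : Type*} [Ring A] {X Y Z : A}
    (hXY : ⁅X, Y⁆ = Z) (hYZ : Commute Y Z) (m : ℕ) :
    ⁅X, Y ^ (m + 1)⁆ = (m + 1) • (Z * Y ^ m) := by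
  induction m with
  | zero => simpa using hXY
  | succ m ih =>
    have hleibniz :
        ⁅X, Y ^ (m + 1) * Y⁆ = ⁅X, Y ^ (m + 1)⁆ * Y + Y ^ (m + 1) * ⁅X, Y⁆ := by
      simp only [Ring.lie_def]; noncomm_ring
    rw [pow_succ _ (m + 1), hleibniz, ih, hXY, smul_mul_assoc, mul_assoc, ← pow_succ,
      (hYZ.pow_left (m + 1)).eq, succ_nsmul _ (m + 1)]

theorem pow_succ_mul_of_lie_eq_of_commute {A : Type*} [Ring A] {X Y Z : A}
    (hXY : ⁅X, Y⁆ = Z) (hYZ : Commute Y Z) (m : ℕ) :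
    Y ^ (m + 1) * X = X * Y ^ (m + 1) - (m + 1) • (Z * Y ^ m) := by
  rw [← lie_pow_succ_of_lie_eq_of_commute hXY hYZ m, Ring.lie_def, sub_sub_cancel]

namespace Module.End

variable {R V : Type*} [CommRing R] [AddCommGroup V] [Module R V]

def xPosSpan (X Y Z : End R V) (v : V) (n : ℕ) : Submodule R V :=
  Submodule.span R {w | ∃ p q s : ℕ, 0 < p ∧ s < n ∧ w = (X ^ p) ((Y ^ q) ((Z ^ s) v))}

variable {X Y Z : End R V} {v : V}

lemma pow_apply_mem_xPosSpan {p : ℕ} (hp : 0 < p) (q : ℕ) {s n : ℕ} (hs : s < n) :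
    (X ^ p) ((Y ^ q) ((Z ^ s) v)) ∈ xPosSpan X Y Z v n :=
  Submodule.subset_span ⟨p, q, s, hp, hs, rfl⟩

lemma pow_apply_mem_xPosSpan_of_mem {w : V} {n : ℕ} (hw : w ∈ xPosSpan X Y Z v n) (p : ℕ) :
    (X ^ p) w ∈ xPosSpan X Y Z v n := by
  refine (Submodule.span_le (p := (xPosSpan X Y Z v n).comap (X ^ p)).mpr ?_ hw)
  rintro _ ⟨p', q, s, hp', hs, rfl⟩
  rw [SetLike.mem_coe, Submodule.mem_comap, ← mul_apply, ← pow_add]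
  exact pow_apply_mem_xPosSpan (by omega) q hs

lemma apply_mem_xPosSpan_succ_of_mem (hXZ : Commute X Z) (hYZ : Commute Y Z) {w : V} {n : ℕ}
    (hw : w ∈ xPosSpan X Y Z v n) : Z w ∈ xPosSpan X Y Z v (n + 1) := by
  refine (Submodule.span_le (p := (xPosSpan X Y Z v (n + 1)).comap Z).mpr ?_ hw)
  rintro _ ⟨p, q, s, hp, hs, rfl⟩
  have hcomm : Z * (X ^ p * (Y ^ q * Z ^ s)) = X ^ p * (Y ^ q * Z ^ (s + 1)) := by
    rw [← mul_assoc, ← (hXZ.pow_left p).eq, mul_assoc, ← mul_assoc Z, ← (hYZ.pow_left q).eq,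
      mul_assoc, ← pow_succ']
  have := congrArg (· v) hcomm
  simp only [mul_apply] at this
  rw [SetLike.mem_coe, Submodule.mem_comap, this]
  exact pow_apply_mem_xPosSpan hp q (by omega)

lemma xPosSpan_mono {m n : ℕ} (h : m ≤ n) : xPosSpan X Y Z v m ≤ xPosSpan X Y Z v n :=
  Submodule.span_mono fun _ ⟨p, q, s, hp, hs, hw⟩ => ⟨p, q, s, hp, by omega, hw⟩

lemma pow_add_apply_pow_apply_sub_mem_xPosSpan (hXY : ⁅X, Y⁆ = Z) (hXZ : Commute X Z)
    (hYZ : Commute Y Z) (n r : ℕ) :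
    (Y ^ (r + n)) ((X ^ n) v) - ((-1) ^ n * (r + n).descFactorial n : R) • (Y ^ r) ((Z ^ n) v)
      ∈ xPosSpan X Y Z v n := by
  induction n generalizing r with
  | zero => simp
  | succ n ih =>
    have hstep : (Y ^ (r + (n + 1))) ((X ^ (n + 1)) v) = X ((Y ^ (r + 1 + n)) ((X ^ n) v))
        - ((r + n + 1 : ℕ) : R) • Z ((Y ^ (r + n)) ((X ^ n) v)) := by
      have := congrArg (· ((X ^ n) v)) (pow_succ_mul_of_lie_eq_of_commute hXY hYZ (r + n))
      simp only [mul_apply, LinearMap.sub_apply, LinearMap.smul_apply, ← Nat.cast_smul_eq_nsmul R]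
        at this
      rw [show r + (n + 1) = r + n + 1 by omega, show r + 1 + n = r + n + 1 by omega,
        pow_succ' X n, mul_apply, this, Nat.cast_succ]
    have hZY : Z ((Y ^ r) ((Z ^ n) v)) = (Y ^ r) ((Z ^ (n + 1)) v) := by
      rw [← mul_apply, ← (hYZ.pow_left r).eq, mul_apply, pow_succ', mul_apply]
    set c₁ : R := (-1) ^ n * (r + 1 + n).descFactorial n
    set d₁ := (Y ^ (r + 1 + n)) ((X ^ n) v) - c₁ • (Y ^ (r + 1)) ((Z ^ n) v)
    set d₀ := (Y ^ (r + n)) ((X ^ n) v) - ((-1) ^ n * (r + n).descFactorial n : R) •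
      (Y ^ r) ((Z ^ n) v)
    have hcomb : (Y ^ (r + (n + 1))) ((X ^ (n + 1)) v)
        - ((-1) ^ (n + 1) * (r + (n + 1)).descFactorial (n + 1) : R) • (Y ^ r) ((Z ^ (n + 1)) v)
        = X d₁ + c₁ • X ((Y ^ (r + 1)) ((Z ^ n) v)) - ((r + n + 1 : ℕ) : R) • Z d₀ := by
      rw [hstep, show r + (n + 1) = r + n + 1 by omega, Nat.succ_descFactorial_succ]
      simp only [d₁, d₀, map_sub, map_smul, hZY]
      push_cast
      module
    rw [hcomb]
    refine Submodule.sub_mem _ (Submodule.add_mem _ ?_ ?_) (Submodule.smul_mem _ _ ?_)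
    · simpa only [pow_one] using
        xPosSpan_mono n.le_succ (pow_apply_mem_xPosSpan_of_mem (ih (r + 1)) 1)
    · simpa only [pow_one] using
        Submodule.smul_mem _ c₁ (pow_apply_mem_xPosSpan (p := 1) one_pos (r + 1) n.lt_succ_self)
    · exact apply_mem_xPosSpan_succ_of_mem hXZ hYZ (ih r)

theorem pow_apply_pow_apply_mem_xPosSpan_of_pow_apply_eq_zero {K W : Type*} [Field K]
    [CharZero K] [AddCommGroup W] [Module K W] {X Y Z : End K W} {w : W} (hXY : ⁅X, Y⁆ = Z)
    (hXZ : Commute X Z) (hYZ : Commute Y Z) {k : ℕ} (hX : (X ^ (k + 1)) w = 0) {a : ℕ}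
    (ha : k < a) (b : ℕ) : (Y ^ b) ((Z ^ a) w) ∈ xPosSpan X Y Z w (k + 1) := by
  induction a using Nat.strong_induction_on generalizing b with
  | _ a ih =>
    have hXa : (X ^ a) w = 0 := by
      rw [← Nat.sub_add_cancel ha, pow_add, mul_apply, hX, map_zero]
    have hle : xPosSpan X Y Z w a ≤ xPosSpan X Y Z w (k + 1) := by
      refine Submodule.span_le.mpr ?_
      rintro _ ⟨p, q, s, hp, hs, rfl⟩
      rcases le_or_gt s k with hsk | hks
      · exact pow_apply_mem_xPosSpan hp q (Nat.lt_succ_of_le hsk)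
      · exact pow_apply_mem_xPosSpan_of_mem (ih s hs hks q) p
    have hc : ((-1) ^ a * (b + a).descFactorial a : K) ≠ 0 := by
      have hfac : (b + a).descFactorial a ≠ 0 := by
        rw [Ne, Nat.descFactorial_eq_zero_iff_lt]; omega
      simp [hfac]
    have := hle (pow_add_apply_pow_apply_sub_mem_xPosSpan hXY hXZ hYZ a b)
    rwa [hXa, map_zero, zero_sub, neg_mem_iff, Submodule.smul_mem_iff _ hc] at this

end Module.End

attribute [local instance] LieRing.ofAssociativeRing

/-- for the Heisenberg algebra ⟨x,y,z⟩ with [x,y]=z central, acting on V,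
if x^{k+1}v = 0 then for a > k, y^b z^a v lies in the span of the vectors x^p y^q z^s v
with p > 0, q ≥ 0, 0 ≤ s ≤ k. -/
theorem stmt11 {L : Type*} [LieRing L] [LieAlgebra ℂ L]
    {V : Type*} [AddCommGroup V] [Module ℂ V] [LieRingModule L V] [LieModule ℂ L V]
    (x y z : L) (hxy : ⁅x, y⁆ = z) (hxz : ⁅x, z⁆ = 0) (hyz : ⁅y, z⁆ = 0)
    (v : V) (k : ℕ) (hx : ((LieModule.toEnd ℂ L V x) ^ (k + 1)) v = 0)
    (a b : ℕ) (ha : k < a) :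
    ((LieModule.toEnd ℂ L V y) ^ b) (((LieModule.toEnd ℂ L V z) ^ a) v) ∈
      Submodule.span ℂ {w : V | ∃ p q s : ℕ, 0 < p ∧ s ≤ k ∧
        w = ((LieModule.toEnd ℂ L V x) ^ p) (((LieModule.toEnd ℂ L V y) ^ q)
          (((LieModule.toEnd ℂ L V z) ^ s) v))} := by
  set ρ := LieModule.toEnd ℂ L V
  have hXY : ⁅ρ x, ρ y⁆ = ρ z := by rw [← LieHom.map_lie, hxy]
  have hcomm {u u' : L} (h : ⁅u, u'⁆ = 0) : Commute (ρ u) (ρ u') := by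
    rw [commute_iff_lie_eq, ← LieHom.map_lie, h, map_zero]
  simpa only [Module.End.xPosSpan, Nat.lt_succ_iff] using
    Module.End.pow_apply_pow_apply_mem_xPosSpan_of_pow_apply_eq_zero hXY (hcomm hxz) (hcomm hyz)
      hx ha b
end

section
/- Fix nonnegative integers k ≥ 1, l and a weight α. Define S_λ[α] = {a ∈ S_λ : wt(a) = α}, S⁰_λ[α] = {a ∈ S_λ[α] : a₁ = 0}, and S^{0,k}_λ[α] = {a ∈ S_λ[α] : a₁ = 0, -a₃ + a₅ = k}. Let λ₂ = (k-1)ω₁ + lω₂. Then S⁰_λ[α] is the disjoint union of S⁰_{λ₂}[α] and S^{0,k}_λ[α]. -/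
/-- The polyhedral set S_μ for μ = k'ω₁ + l'ω₂ in type G₂. -/
def Spoly (k l : ℕ) : Set (ℕ × ℕ × ℕ × ℕ × ℕ) :=
  {a | a.1 ≤ k ∧ (a.1 : ℤ) - a.2.2.1 + a.2.2.2.2 ≤ (k : ℤ) ∧
       2 * a.2.1 + 3 * a.2.2.1 + 3 * a.2.2.2.1 ≤ l ∧
       2 * a.2.1 + 3 * a.2.2.2.1 + 3 * a.2.2.2.2 ≤ l}

/-- wt(a) = (a₁-a₃-a₄+a₅)ω₁ + (a₂+3a₃+3a₄)ω₂, in coordinates w.r.t. (ω₁, ω₂). -/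
def wt5 (a : ℕ × ℕ × ℕ × ℕ × ℕ) : ℤ × ℤ :=
  ((a.1 : ℤ) - a.2.2.1 - a.2.2.2.1 + a.2.2.2.2,
   (a.2.1 : ℤ) + 3 * a.2.2.1 + 3 * a.2.2.2.1)

/-- for k ≥ 1 and λ₂ = (k-1)ω₁ + lω₂,
S⁰_λ[α] is the disjoint union of S⁰_{λ₂}[α] and S^{0,k}_λ[α]. -/
theorem stmt13 (k l : ℕ) (hk : 1 ≤ k) (α : ℤ × ℤ) :
    {a ∈ Spoly k l | wt5 a = α ∧ a.1 = 0} =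
      {a ∈ Spoly (k - 1) l | wt5 a = α ∧ a.1 = 0} ∪
        {a ∈ Spoly k l | wt5 a = α ∧ a.1 = 0 ∧ -(a.2.2.1 : ℤ) + a.2.2.2.2 = (k : ℤ)} ∧
    Disjoint {a ∈ Spoly (k - 1) l | wt5 a = α ∧ a.1 = 0}
      {a ∈ Spoly k l | wt5 a = α ∧ a.1 = 0 ∧ -(a.2.2.1 : ℤ) + a.2.2.2.2 = (k : ℤ)} := by
  have hcast : ((k - 1 : ℕ) : ℤ) = (k : ℤ) - 1 := by
    omega
  constructor
  · ext a
    obtain ⟨a1, a2, a3, a4, a5⟩ := a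
    simp only [Set.mem_setOf_eq, Set.mem_union, Spoly, wt5, Set.mem_setOf_eq] at *
    constructor
    · rintro ⟨⟨h1, h2, h3, h4⟩, hw, h0⟩
      subst h0
      rcases le_or_gt (-(a3 : ℤ) + a5) ((k : ℤ) - 1) with h | h
      · exact Or.inl ⟨⟨by omega, by push_cast; omega, h3, h4⟩, hw, rfl⟩
      · exact Or.inr ⟨⟨h1, h2, h3, h4⟩, hw, rfl, by push_cast at h2 ⊢; omega⟩
    · rintro (⟨⟨h1, h2, h3, h4⟩, hw, h0⟩ | ⟨⟨h1, h2, h3, h4⟩, hw, h0, h5⟩)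
      · subst h0
        refine ⟨⟨by omega, ?_, h3, h4⟩, hw, rfl⟩
        push_cast at h2 ⊢; omega
      · exact ⟨⟨h1, h2, h3, h4⟩, hw, h0⟩
  · rw [Set.disjoint_left]
    rintro ⟨a1, a2, a3, a4, a5⟩ ⟨⟨h1, h2, h3, h4⟩, hw, h0⟩ ⟨_, _, h0', h5⟩
    simp only [Spoly, Set.mem_setOf_eq] at h2
    subst h0
    dsimp only at h2 h5
    push_cast at h2
    omega
end

section
/- Fix nonnegative integers k ≥ 1, l and define S_λ, S_{λ₂} as above with λ = kω₁+lω₂, λ₂ = (k-1)ω₁+lω₂. Then the map a ↦ a - e₁ (where e₁ = (1,0,0,0,0)) is an injection from {a ∈ S_λ : a₁ > 0} into S_{λ₂}, and wt(a - e₁) = wt(a) - ω₁. -/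
/-- for k ≥ 1, the map a ↦ a - e₁ is an injection from
{a ∈ S_λ : a₁ > 0} into S_{λ₂}, and wt(a - e₁) = wt(a) - ω₁. -/
theorem stmt14 (k l : ℕ) (hk : 1 ≤ k) :
    (∀ a ∈ Spoly k l, 0 < a.1 →
      (a.1 - 1, a.2) ∈ Spoly (k - 1) l ∧
      wt5 (a.1 - 1, a.2) = ((wt5 a).1 - 1, (wt5 a).2)) ∧
    Set.InjOn (fun a : ℕ × ℕ × ℕ × ℕ × ℕ => (a.1 - 1, a.2))
      {a ∈ Spoly k l | 0 < a.1} := by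
  constructor
  · rintro ⟨a1, a2, a3, a4, a5⟩ ⟨h1, h2, h3, h4⟩ hpos
    refine ⟨⟨?_, ?_, h3, h4⟩, ?_⟩
    · omega
    · simp only at *
      push_cast [Nat.cast_sub hpos, Nat.cast_sub hk] at *
      linarith
    · simp only [wt5, Nat.cast_sub hpos]
      push_cast
      exact Prod.ext (by ring) rfl
  · rintro ⟨a1, a2⟩ ⟨_, ha⟩ ⟨b1, b2⟩ ⟨_, hb⟩ h
    simp only [Prod.mk.injEq] at h
    exact Prod.ext (by omega) h.2
end
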